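/- arXiv:2312.10810 — 2 statements merged into one kernel-verified Lean document; each statement's English description precedes it below -/
import Mathlib

section
/- Let Σ = {a,b,#} and for n ∈ ℕ let P_n = { w # wᴿ : w ∈ {a,b}ⁿ } ⊆ Σ*. Suppose L ⊆ Γ* is a language over an alphabet Γ = {a,b,#₁,…,#_m} such that (i) h(L) = P_n for the homomorphism h : Γ* → Σ* fixing a,b and sending each #ᵢ to #, and (ii) L is closed in the sense that whenever u#ᵢuᴿ ∈ L and v#ᵢvᴿ ∈ L then u#ᵢvᴿ ∈ L. Then for each i ∈ {1,…,m} there is at most one w ∈ {a,b}ⁿ with w#ᵢwᴿ corresponding to an element of L, and consequently m ≥ 2ⁿ. -/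
/-!
Erasing labels turns `u #ᵢ vᴿ` into `u # vᴿ`, which lies in `Pₙ` only when `u = v`; so by the
closure property each label `#ᵢ` is attached to at most one palindrome of `L`. On the other hand
every `w # wᴿ ∈ Pₙ` lifts to some `w #ᵢ wᴿ ∈ L`, and `w ↦ i` is then an injection of the `2ⁿ`
words of length `n` into the `m` labels.
-/
section

variable {α ι κ : Type*}

def markedWord (u : List α) (c : ι) (v : List α) : List (α ⊕ ι) :=
  u.map Sum.inl ++ Sum.inr c :: v.map Sum.inl

/-- `Pₙ = { w # wᴿ : |w| = n }`. -/
def markedPalindromes (α : Type*) (n : ℕ) : Set (List (α ⊕ Unit)) :=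
  {x | ∃ w : List α, w.length = n ∧ x = markedWord w () w.reverse}

@[simp]
theorem map_sumMap_markedWord (f : ι → κ) (u : List α) (c : ι) (v : List α) :
    (markedWord u c v).map (Sum.map id f) = markedWord u (f c) v := by
  simp [markedWord, Function.comp_def]

theorem markedWord_inj {u u' v v' : List α} {c c' : ι} :
    markedWord u c v = markedWord u' c' v' ↔ u = u' ∧ c = c' ∧ v = v' := by
  refine ⟨fun h => ?_, by rintro ⟨rfl, rfl, rfl⟩; rfl⟩
  induction u generalizing u' with
  | nil => cases u' <;> simp_all [markedWord, List.map_inj_right]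
  | cons a u ih =>
    cases u' with
    | nil => simp [markedWord] at h
    | cons a' u' =>
      simp only [markedWord, List.map_cons, List.cons_append, List.cons.injEq, Sum.inl.injEq] at h
      obtain ⟨rfl, h⟩ := h
      simpa using ih h

theorem eq_map_inl_of_map_sumMap_eq {f : ι → κ} {l : List (α ⊕ ι)} {w : List α}
    (h : l.map (Sum.map id f) = w.map Sum.inl) : l = w.map Sum.inl := by
  induction w generalizing l with
  | nil => simpa using h
  | cons a w ih =>
    obtain ⟨x, l, rfl, hx, hl⟩ := List.map_eq_cons_iff.mp h
    cases x with
    | inl b => simp_all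
    | inr i => simp at hx

theorem exists_eq_markedWord_of_map_sumMap_eq {f : ι → κ} {x : List (α ⊕ ι)} {u v : List α}
    {k : κ} (h : x.map (Sum.map id f) = markedWord u k v) : ∃ c, x = markedWord u c v := by
  obtain ⟨l₁, l₂, rfl, h₁, h₂⟩ := List.map_eq_append_iff.mp h
  obtain ⟨y, l₃, rfl, hy, h₃⟩ := List.map_eq_cons_iff.mp h₂
  cases y with
  | inl b => simp at hy
  | inr c =>
    exact ⟨c, by rw [markedWord, eq_map_inl_of_map_sumMap_eq h₁, eq_map_inl_of_map_sumMap_eq h₃]⟩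

variable {n : ℕ} {L : Set (List (α ⊕ ι))}

theorem eq_of_markedWord_mem
    (hproj : List.map (Sum.map id fun _ => ()) '' L ⊆ markedPalindromes α n)
    (hclosed : ∀ u v i, markedWord u i u.reverse ∈ L → markedWord v i v.reverse ∈ L →
      markedWord u i v.reverse ∈ L)
    {u v : List α} {i : ι} (hu : markedWord u i u.reverse ∈ L)
    (hv : markedWord v i v.reverse ∈ L) : u = v := by
  obtain ⟨w, -, hw⟩ : markedWord u () v.reverse ∈ markedPalindromes α n :=
    hproj ⟨_, hclosed u v i hu hv, map_sumMap_markedWord _ _ _ _⟩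
  obtain ⟨rfl, -, hvw⟩ := markedWord_inj.mp hw
  exact (List.reverse_inj.mp hvw).symm

theorem exists_markedWord_mem
    (hproj : markedPalindromes α n ⊆ List.map (Sum.map id fun _ => ()) '' L)
    {w : List α} (hw : w.length = n) : ∃ i, markedWord w i w.reverse ∈ L := by
  obtain ⟨x, hxL, hx⟩ : markedWord w () w.reverse ∈ List.map (Sum.map id fun _ => ()) '' L :=
    hproj ⟨w, hw, rfl⟩
  obtain ⟨i, rfl⟩ := exists_eq_markedWord_of_map_sumMap_eq hx
  exact ⟨i, hxL⟩

theorem card_pow_le_card [Fintype α] [Fintype ι]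
    (hproj : List.map (Sum.map id fun _ => ()) '' L = markedPalindromes α n)
    (hclosed : ∀ u v i, markedWord u i u.reverse ∈ L → markedWord v i v.reverse ∈ L →
      markedWord u i v.reverse ∈ L) :
    Fintype.card α ^ n ≤ Fintype.card ι := by
  choose label hlabel using fun w : List.Vector α n => exists_markedWord_mem hproj.ge w.toList_length
  calc Fintype.card α ^ n = Fintype.card (List.Vector α n) := (card_vector n).symm
    _ ≤ Fintype.card ι := Fintype.card_le_of_injective label fun w w' h =>
      List.Vector.toList_injective <|
        eq_of_markedWord_mem hproj.le hclosed (hlabel w) (h ▸ hlabel w')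

end

/-- Letters a, b are modelled as `Sum.inl true/false`; the marker # (resp. the
labelled markers #₁,…,#_m) as `Sum.inr ()` (resp. `Sum.inr i` for `i : Fin m`). -/
theorem labelled_palindromes (n m : ℕ) (L : Set (List (Bool ⊕ Fin m)))
    -- (i) h(L) = Pₙ = { w#wᴿ : w ∈ {a,b}ⁿ }:
    (hproj : (fun x : List (Bool ⊕ Fin m) => x.map (Sum.map id fun _ => ())) '' L =
      {x : List (Bool ⊕ Unit) | ∃ w : List Bool, w.length = n ∧
        x = (w.map Sum.inl) ++ (Sum.inr ()) :: (w.reverse.map Sum.inl)})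
    -- (ii) closure: u#ᵢuᴿ ∈ L and v#ᵢvᴿ ∈ L imply u#ᵢvᴿ ∈ L:
    (hclosed : ∀ (u v : List Bool) (i : Fin m),
      ((u.map Sum.inl) ++ (Sum.inr i) :: (u.reverse.map Sum.inl)) ∈ L →
      ((v.map Sum.inl) ++ (Sum.inr i) :: (v.reverse.map Sum.inl)) ∈ L →
      ((u.map Sum.inl) ++ (Sum.inr i) :: (v.reverse.map Sum.inl)) ∈ L) :
    (∀ (i : Fin m) (u v : List Bool), u.length = n → v.length = n →
      ((u.map Sum.inl) ++ (Sum.inr i) :: (u.reverse.map Sum.inl)) ∈ L →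
      ((v.map Sum.inl) ++ (Sum.inr i) :: (v.reverse.map Sum.inl)) ∈ L → u = v) ∧
    2 ^ n ≤ m := by
  change List.map (Sum.map id fun _ => ()) '' L = markedPalindromes Bool n at hproj
  refine ⟨fun i u v _ _ hu hv => eq_of_markedWord_mem hproj.le hclosed hu hv, ?_⟩
  simpa using card_pow_le_card hproj hclosed
end

section
/- In the term algebra T(G) over a finite generating set G, evaluated in the semiring of finite languages 2_fin^{Σ*} over Σ = {a,b,#} with generators {a},{b},{#}: any term t whose evaluation equals the language { w # wᴿ : w ∈ {a,b}ⁿ } has length (number of symbols, equivalently number of leaves plus internal nodes) at least 2ⁿ. -/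
/-- Terms over the generators {a},{b},{#} of the semiring of finite languages
over Σ = {a,b,#} (letters a, b modelled as `Sum.inl true/false`, # as
`Sum.inr ()`). -/
inductive LTerm where
  | empt : LTerm              -- ∅, the zero
  | eps : LTerm               -- {ε}, the one
  | la : LTerm                -- {a}
  | lb : LTerm                -- {b}
  | hash : LTerm              -- {#}
  | union : LTerm → LTerm → LTerm
  | conc : LTerm → LTerm → LTerm

/-- Evaluation of a term in the semiring of languages over {a,b,#}. -/
def LTerm.eval : LTerm → Set (List (Bool ⊕ Unit))
  | .empt => ∅
  | .eps => {[]}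
  | .la => {[Sum.inl true]}
  | .lb => {[Sum.inl false]}
  | .hash => {[Sum.inr ()]}
  | .union s t => s.eval ∪ t.eval
  | .conc s t => {x | ∃ u ∈ s.eval, ∃ v ∈ t.eval, x = u ++ v}

/-- The length (number of symbols/nodes) of a term. -/
def LTerm.size : LTerm → ℕ
  | .empt | .eps | .la | .lb | .hash => 1
  | .union s t | .conc s t => s.size + t.size + 1

/-!
Label the occurrences of `{#}` in `t`. Every word of `t.eval` containing `#` passes through one
of them, and the words passing through a fixed occurrence form a set `L # R` contained in
`t.eval`. For `t.eval = {w # wᴿ}`, if two palindromes `w₁ # w₁ᴿ` and `w₂ # w₂ᴿ` passed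
through the same occurrence then so would the word `w₁ # w₂ᴿ`, forcing `w₁ = w₂`. So the `2ⁿ`
palindromes need pairwise distinct occurrences of `{#}`, and there are at most `t.size` of those.
-/

namespace LTerm

def hashJoin (p : Set (List (Bool ⊕ Unit)) × Set (List (Bool ⊕ Unit))) :
    Set (List (Bool ⊕ Unit)) :=
  Set.image2 (fun u v => u ++ Sum.inr () :: v) p.1 p.2

/-- One pair `(L, R)` per occurrence of `{#}` in the term: the left and right contexts of that
occurrence, so that `hashJoin (L, R)` is the set of words of `eval` produced through it. -/
def hashContexts : LTerm → List (Set (List (Bool ⊕ Unit)) × Set (List (Bool ⊕ Unit)))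
  | .hash => [({[]}, {[]})]
  | .empt | .eps | .la | .lb => []
  | .union s t => s.hashContexts ++ t.hashContexts
  | .conc s t =>
      s.hashContexts.map (fun p => (p.1, Set.image2 (· ++ ·) p.2 t.eval)) ++
        t.hashContexts.map (fun p => (Set.image2 (· ++ ·) s.eval p.1, p.2))

theorem length_hashContexts_le_size (t : LTerm) : t.hashContexts.length ≤ t.size := by
  induction t <;> simp only [hashContexts, size, List.length_append, List.length_map,
    List.length_nil, List.length_singleton] <;> omega

theorem hashJoin_subset_eval {t : LTerm}
    {p : Set (List (Bool ⊕ Unit)) × Set (List (Bool ⊕ Unit))} (hp : p ∈ t.hashContexts) :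
    hashJoin p ⊆ t.eval := by
  induction t generalizing p with
  | empt | eps | la | lb => simp [hashContexts] at hp
  | hash =>
    obtain rfl := List.mem_singleton.1 hp
    simp [hashJoin, eval]
  | union s t ihs iht =>
    rcases List.mem_append.1 hp with hp | hp
    · exact (ihs hp).trans Set.subset_union_left
    · exact (iht hp).trans Set.subset_union_right
  | conc s t ihs iht =>
    rintro _ ⟨u, hu, v, hv, rfl⟩
    rcases List.mem_append.1 hp with hp | hp
    · obtain ⟨q, hq, rfl⟩ := List.mem_map.1 hp
      obtain ⟨v', hv', y, hy, rfl⟩ := hv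
      exact ⟨u ++ Sum.inr () :: v', ihs hq ⟨u, hu, v', hv', rfl⟩, y, hy, by simp⟩
    · obtain ⟨q, hq, rfl⟩ := List.mem_map.1 hp
      obtain ⟨x, hx, u', hu', rfl⟩ := hu
      exact ⟨x, hx, u' ++ Sum.inr () :: v, iht hq ⟨u', hu', v, hv, rfl⟩, by simp⟩

theorem exists_mem_hashJoin_of_mem_eval {t : LTerm} {x : List (Bool ⊕ Unit)} (hx : x ∈ t.eval)
    (hhash : Sum.inr () ∈ x) : ∃ p ∈ t.hashContexts, x ∈ hashJoin p := by
  induction t generalizing x with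
  | empt => exact absurd hx id
  | eps | la | lb =>
    obtain rfl := Set.mem_singleton_iff.1 hx
    simp at hhash
  | hash => exact ⟨_, List.mem_singleton_self _, [], rfl, [], rfl, hx.symm⟩
  | union s t ihs iht =>
    rcases hx with hx | hx
    · obtain ⟨p, hp, hxp⟩ := ihs hx hhash
      exact ⟨p, List.mem_append_left _ hp, hxp⟩
    · obtain ⟨p, hp, hxp⟩ := iht hx hhash
      exact ⟨p, List.mem_append_right _ hp, hxp⟩
  | conc s t ihs iht =>
    obtain ⟨a, ha, b, hb, rfl⟩ := hx
    rcases List.mem_append.1 hhash with hhash | hhash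
    · obtain ⟨p, hp, u, hu, v, hv, rfl⟩ := ihs ha hhash
      exact ⟨_, List.mem_append_left _ (List.mem_map_of_mem hp), u, hu, v ++ b,
        ⟨v, hv, b, hb, rfl⟩, by simp⟩
    · obtain ⟨p, hp, u, hu, v, hv, rfl⟩ := iht hb hhash
      exact ⟨_, List.mem_append_right _ (List.mem_map_of_mem hp), a ++ u, ⟨a, ha, u, hu, rfl⟩,
        v, hv, by simp⟩

end LTerm

def hashPalindrome (w : List Bool) : List (Bool ⊕ Unit) :=
  w.map Sum.inl ++ Sum.inr () :: w.reverse.map Sum.inl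

theorem hashPalindrome_eq_iff {w : List Bool} {u v : List (Bool ⊕ Unit)} :
    hashPalindrome w = u ++ Sum.inr () :: v ↔
      u = w.map Sum.inl ∧ v = w.reverse.map Sum.inl := by
  rw [hashPalindrome, List.append_cons_inj_of_notMem (by simp) (by simp)]
  simp [eq_comm]

theorem eq_of_hashPalindrome_mem_hashJoin
    {p : Set (List (Bool ⊕ Unit)) × Set (List (Bool ⊕ Unit))}
    (hp : LTerm.hashJoin p ⊆ Set.range hashPalindrome) {w₁ w₂ : List Bool}
    (h₁ : hashPalindrome w₁ ∈ LTerm.hashJoin p)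
    (h₂ : hashPalindrome w₂ ∈ LTerm.hashJoin p) :
    w₁ = w₂ := by
  obtain ⟨u, hu, _, _, hw₁⟩ := h₁
  obtain ⟨_, _, v, hv, hw₂⟩ := h₂
  obtain ⟨rfl, -⟩ := hashPalindrome_eq_iff.1 hw₁.symm
  obtain ⟨-, rfl⟩ := hashPalindrome_eq_iff.1 hw₂.symm
  obtain ⟨w, hw⟩ := hp ⟨_, hu, _, hv, rfl⟩
  obtain ⟨hw₁, hw₂⟩ := hashPalindrome_eq_iff.1 hw
  have hinj : Function.Injective (List.map (Sum.inl : Bool → Bool ⊕ Unit)) :=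
    List.map_injective_iff.2 Sum.inl_injective
  rw [hinj hw₁, List.reverse_injective (hinj hw₂)]

/-- Any term evaluating to { w#wᴿ : w ∈ {a,b}ⁿ } has length at least 2ⁿ. -/
theorem palindrome_term_size (n : ℕ) (t : LTerm)
    (h : t.eval = {x : List (Bool ⊕ Unit) | ∃ w : List Bool, w.length = n ∧
      x = (w.map Sum.inl) ++ (Sum.inr ()) :: (w.reverse.map Sum.inl)}) :
    2 ^ n ≤ t.size := by
  set C := t.hashContexts
  have hcover (w : List.Vector Bool n) : ∃ i : Fin C.length, hashPalindrome w.toList ∈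
      LTerm.hashJoin (C.get i) := by
    have hw : hashPalindrome w.toList ∈ t.eval := by
      rw [h]
      exact ⟨w.toList, w.toList_length, rfl⟩
    obtain ⟨p, hp, hw⟩ := LTerm.exists_mem_hashJoin_of_mem_eval hw (by simp [hashPalindrome])
    obtain ⟨i, rfl⟩ := List.get_of_mem hp
    exact ⟨i, hw⟩
  choose f hf using hcover
  have hrange (i : Fin C.length) : LTerm.hashJoin (C.get i) ⊆ Set.range hashPalindrome :=
    fun x hx => by
      obtain ⟨w, -, rfl⟩ := h ▸ LTerm.hashJoin_subset_eval (List.get_mem C i) hx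
      exact ⟨w, rfl⟩
  have hf_inj : Function.Injective f := fun w₁ w₂ hw => List.Vector.toList_injective <|
    eq_of_hashPalindrome_mem_hashJoin (hrange _) (hf w₁) (hw ▸ hf w₂)
  calc 2 ^ n = Fintype.card (List.Vector Bool n) := by simp [card_vector]
    _ ≤ Fintype.card (Fin C.length) := Fintype.card_le_of_injective f hf_inj
    _ = C.length := Fintype.card_fin _
    _ ≤ t.size := t.length_hashContexts_le_size
end
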